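/- A positive integer n ≥ 2 is prime if and only if T(n) = 1 + T(n-1). -/

import Mathlib

/-! Splitting off the last term of a sequence with `f A = n` leaves a divisor `a` of `n` and a
sequence with value `n / a - 1`, empty exactly when `a = n`. With `T 0 = 1` counting the empty
sequence this gives `T n = ∑_{d ∣ n} T (d - 1)`. The divisors `1` and `n` contribute `1 + T (n - 1)`,
and since `T` is positive, any further divisor makes `T n` strictly larger. -/

/-- `f (a₁,…,a_k)` defined by `f(a₁) = a₁`, `f(a₁,…,a_{i+1}) = (f(a₁,…,a_i) + 1) · a_{i+1}`. -/
def f (l : List ℕ) : ℕ := l.foldl (fun acc a => (acc + 1) * a) 0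

/-- `T n` is the number of nonempty finite sequences of positive integers with `f A = n`,
with the additional convention `T 0 = 1`. -/
noncomputable def T : ℕ → ℕ
  | 0 => 1
  | n + 1 => Nat.card {l : List ℕ // l ≠ [] ∧ (∀ a ∈ l, 0 < a) ∧ f l = n + 1}

def admissibleSeqs (n : ℕ) : Set (List ℕ) := {l | (∀ a ∈ l, 0 < a) ∧ f l = n}

lemma f_append_singleton (l : List ℕ) (a : ℕ) : f (l ++ [a]) = (f l + 1) * a := by
  simp [f, List.foldl_append]

lemma admissibleSeqs_zero : admissibleSeqs 0 = {[]} := by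
  ext l
  refine ⟨fun ⟨hpos, hf⟩ => ?_, by rintro rfl; simp [admissibleSeqs, f]⟩
  obtain rfl | ⟨L, b, rfl⟩ := l.eq_nil_or_concat'
  · rfl
  · have hb : 0 < b := hpos b (by simp)
    rw [f_append_singleton] at hf
    exact absurd hf (Nat.mul_ne_zero (Nat.succ_ne_zero _) hb.ne')

lemma T_eq_card (n : ℕ) : T n = Nat.card (admissibleSeqs n) := by
  cases n with
  | zero =>
    rw [admissibleSeqs_zero, Nat.card_unique]
    rfl
  | succ n =>
    refine Nat.card_congr (Equiv.subtypeEquivRight fun l => ?_)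
    refine ⟨fun h => h.2, fun h => ⟨?_, h⟩⟩
    rintro rfl
    exact absurd h.2 (by simp [f])

lemma mem_admissibleSeqs_append {n a : ℕ} (ha : a ∈ n.divisors) {l : List ℕ}
    (hl : l ∈ admissibleSeqs (n / a - 1)) : l ++ [a] ∈ admissibleSeqs n := by
  obtain ⟨hpos, hf⟩ := hl
  have ha_pos := Nat.pos_of_mem_divisors ha
  have hquot : 0 < n / a := Nat.div_pos (Nat.divisor_le ha) ha_pos
  refine ⟨?_, ?_⟩
  · simp only [List.mem_append, List.mem_singleton]
    rintro b (hb | rfl)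
    exacts [hpos b hb, ha_pos]
  rw [f_append_singleton, hf, Nat.sub_add_cancel hquot,
    Nat.div_mul_cancel (Nat.dvd_of_mem_divisors ha)]

def appendLast (n : ℕ) :
    (Σ a : n.divisors, admissibleSeqs (n / a - 1)) → admissibleSeqs n :=
  fun x => ⟨x.2.1 ++ [x.1.1], mem_admissibleSeqs_append x.1.2 x.2.2⟩

lemma appendLast_bijective (n : ℕ) (hn : n ≠ 0) : Function.Bijective (appendLast n) := by
  constructor
  · rintro ⟨⟨a, ha⟩, ⟨l, hl⟩⟩ ⟨⟨b, hb⟩, ⟨m, hm⟩⟩ h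
    have h' : l ++ [a] = m ++ [b] := congrArg Subtype.val h
    obtain ⟨rfl, hab⟩ := List.append_inj' h' rfl
    cases List.singleton_inj.mp hab
    rfl
  · rintro ⟨l, hpos, hf⟩
    obtain rfl | ⟨L, b, rfl⟩ := l.eq_nil_or_concat'
    · exact absurd hf.symm (by simpa [f] using hn)
    rw [f_append_singleton] at hf
    have hb : b ∈ n.divisors := Nat.mem_divisors.mpr ⟨Dvd.intro_left _ hf, hn⟩
    have hquot : n / b = f L + 1 := by
      rw [← hf, Nat.mul_div_cancel _ (Nat.pos_of_mem_divisors hb)]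
    refine ⟨⟨⟨b, hb⟩, ⟨L, fun a ha => hpos a (by simp [ha]), by simp [hquot]⟩⟩, rfl⟩

instance admissibleSeqs_finite (n : ℕ) : Finite (admissibleSeqs n) := by
  induction n using Nat.strong_induction_on with
  | _ n ih =>
    rcases eq_or_ne n 0 with rfl | hn
    · rw [admissibleSeqs_zero]
      exact Set.finite_singleton _
    · have : ∀ a : n.divisors, Finite (admissibleSeqs (n / a - 1)) :=
        fun a => ih _ (by have := Nat.div_le_self n a; omega)
      exact Finite.of_surjective _ (appendLast_bijective n hn).2

lemma T_pos (n : ℕ) : 0 < T n := by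
  rw [T_eq_card]
  have : Nonempty (admissibleSeqs n) := by
    rcases eq_or_ne n 0 with rfl | hn
    · exact ⟨⟨[], by simp [admissibleSeqs, f]⟩⟩
    · exact ⟨⟨[n], by simp [admissibleSeqs, f, Nat.pos_of_ne_zero hn]⟩⟩
  exact Nat.card_pos

theorem T_eq_sum_divisors {n : ℕ} (hn : n ≠ 0) : T n = ∑ d ∈ n.divisors, T (d - 1) := by
  rw [T_eq_card, ← Nat.card_eq_of_bijective _ (appendLast_bijective n hn), Nat.card_sigma,
    ← Nat.sum_div_divisors]
  simp only [T_eq_card]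
  exact Finset.sum_coe_sort n.divisors fun a => Nat.card (admissibleSeqs (n / a - 1))

lemma T_of_prime {p : ℕ} (hp : p.Prime) : T p = 1 + T (p - 1) := by
  rw [T_eq_sum_divisors hp.ne_zero, hp.sum_divisors, add_comm]
  rfl

lemma one_add_T_sub_one_lt_of_not_prime {n : ℕ} (hn : 2 ≤ n) (hp : ¬ n.Prime) :
    1 + T (n - 1) < T n := by
  obtain ⟨d, hdn, hd2, hdlt⟩ := Nat.exists_dvd_of_not_prime2 hn hp
  have hsub : {1, d, n} ⊆ n.divisors := by
    simp [Finset.insert_subset_iff, hdn, show n ≠ 0 by omega]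
  have hsum : ∑ m ∈ ({1, d, n} : Finset ℕ), T (m - 1) = T 0 + T (d - 1) + T (n - 1) := by
    rw [Finset.sum_insert (by simp; omega), Finset.sum_pair (by omega), add_assoc]
  have hle := Finset.sum_le_sum_of_subset hsub (f := fun m => T (m - 1))
  have hT0 : T 0 = 1 := rfl
  rw [hsum, hT0] at hle
  rw [T_eq_sum_divisors (n := n) (by omega)]
  have := T_pos (d - 1)
  omega

theorem prime_iff_T (n : ℕ) (hn : 2 ≤ n) :
    n.Prime ↔ T n = 1 + T (n - 1) :=
  ⟨T_of_prime, fun h => by_contra fun hp => (one_add_T_sub_one_lt_of_not_prime hn hp).ne' h⟩
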